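/- Let 𝔖 be a translative cofinite G-semimatroid and let r:=rk̲(E_𝔖). Then T_𝔖(x,y) = Σ_{GX∈𝒞/G} (x−1)^{r−rk(X)}·(y−1)^{|X|−rk(X)}; that is, the Tutte polynomial of 𝔖 equals the corank-nullity polynomial s(𝒞_𝔖;u,v):=Σ_{GX∈𝒞/G} u^{r−rk(X)} v^{|X|−rk(X)} of the orbit set 𝒞_𝔖=𝒞/G evaluated at u=x−1, v=y−1. -/

import Mathlib

open scoped Classical Pointwise

/-- A finitary semimatroid on the ground set `S`: a nonempty, finite-dimensional
simplicial complex `C` of finite subsets of `S` (containing all singletons), together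
with a rank function satisfying (R1)-(R3), (CR1), (CR2). -/
structure FinSemimatroid (S : Type*) [DecidableEq S] where
  C : Set (Finset S)
  rk : Finset S → ℕ
  nonempty : C.Nonempty
  downClosed : ∀ ⦃X Y : Finset S⦄, X ∈ C → Y ⊆ X → Y ∈ C
  singleton_mem : ∀ x : S, ({x} : Finset S) ∈ C
  finDim : ∃ d : ℕ, ∀ X ∈ C, X.card ≤ d
  r1 : ∀ X ∈ C, rk X ≤ X.card
  r2 : ∀ ⦃X Y : Finset S⦄, X ∈ C → Y ∈ C → X ⊆ Y → rk X ≤ rk Y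
  r3 : ∀ ⦃X Y : Finset S⦄, X ∈ C → Y ∈ C → X ∪ Y ∈ C →
    rk (X ∪ Y) + rk (X ∩ Y) ≤ rk X + rk Y
  cr1 : ∀ ⦃X Y : Finset S⦄, X ∈ C → Y ∈ C → rk X = rk (X ∩ Y) → X ∪ Y ∈ C
  cr2 : ∀ ⦃X Y : Finset S⦄, X ∈ C → Y ∈ C → rk X < rk Y →
    ∃ y ∈ Y, y ∉ X ∧ insert y X ∈ C

namespace FinSemimatroid

variable {S : Type*} [DecidableEq S]

/-- The closure of a central set. -/
def cl (M : FinSemimatroid S) (X : Finset S) : Set S :=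
  {y : S | insert y X ∈ M.C ∧ M.rk (insert y X) = M.rk X}

/-- A flat is a closed central set. -/
def IsFlat (M : FinSemimatroid S) (X : Finset S) : Prop :=
  X ∈ M.C ∧ M.cl X = (X : Set S)

/-- The poset of flats, ordered by inclusion. -/
abbrev Flats (M : FinSemimatroid S) : Type _ := {X : Finset S // M.IsFlat X}

/-- A simple finitary semimatroid. -/
def Simple (M : FinSemimatroid S) : Prop :=
  (∀ x : S, M.rk {x} = 1) ∧
    ∀ x y : S, x ≠ y → ({x, y} : Finset S) ∈ M.C → M.rk {x, y} = 2

end FinSemimatroid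

/-- A poset is chain-finite if all its chains are finite. -/
def ChainFinite (L : Type*) [PartialOrder L] : Prop :=
  ∀ c : Set L, IsChain (· ≤ ·) c → c.Finite

/-- An atom of a bounded-below poset: an element covering the minimum. -/
def PosetAtom {L : Type*} [PartialOrder L] (a : L) : Prop :=
  ∃ bot : L, IsBot bot ∧ bot ⋖ a

/-- `L` (with rank function `rk`) is a finite geometric lattice (finite, bounded below,
a lattice, ranked by `rk`, atomic and semimodular) with at most `N` atoms. -/
def IsFinGeomLatticeAtMost (L : Type*) [PartialOrder L] (rk : L → ℕ) (N : ℕ) : Prop :=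
  Finite L ∧
    ∃ bot : L, IsBot bot ∧
      (∀ x y : L, ∃ m : L, IsGLB {x, y} m) ∧
      (∀ x y : L, ∃ j : L, IsLUB {x, y} j) ∧
      (∀ x y : L, x ⋖ y → rk y = rk x + 1) ∧
      (∀ x : L, ∃ A : Set L, (∀ a ∈ A, bot ⋖ a) ∧ IsLUB A x) ∧
      (∀ x y m j : L, IsGLB {x, y} m → IsLUB {x, y} j → rk j + rk m ≤ rk x + rk y) ∧
      Nat.card {a : L | bot ⋖ a} ≤ N
/-- A `G`-semimatroid: an action of `G` on a finitary semimatroid, preserving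
centrality and rank. -/
structure GSemimatroid (G S : Type*) [Group G] [MulAction G S] [DecidableEq S]
    extends FinSemimatroid S where
  smul_mem : ∀ (g : G) ⦃X : Finset S⦄, X ∈ C → X.image (g • ·) ∈ C
  rk_smul : ∀ (g : G) ⦃X : Finset S⦄, X ∈ C → rk (X.image (g • ·)) = rk X

namespace GSemimatroid

variable {G S : Type*} [Group G] [MulAction G S] [DecidableEq S]

/-- The set of orbits `E_𝔖 = S/G`. -/
abbrev E (G S : Type*) [Group G] [MulAction G S] : Type _ :=
  Quotient (MulAction.orbitRel G S)

/-- The orbit of a point. -/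
def orbOf (G : Type*) {S : Type*} [Group G] [MulAction G S] (x : S) : E G S :=
  Quotient.mk (MulAction.orbitRel G S) x

/-- `X̲`: the set of orbits met by `X`. -/
def under (G : Type*) {S : Type*} [Group G] [MulAction G S] (X : Finset S) :
    Set (E G S) :=
  orbOf G '' (X : Set S)

variable (M : GSemimatroid G S)

/-- `𝒞̲ = {X̲ : X ∈ 𝒞}`. -/
def CQ : Set (Set (E G S)) := {A | ∃ X ∈ M.C, under G X = A}

/-- `rk̲ A = max { rk X : X ∈ 𝒞, X̲ ⊆ A }`. -/
noncomputable def rkQ (A : Set (E G S)) : ℕ :=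
  sSup {n : ℕ | ∃ X ∈ M.C, under G X ⊆ A ∧ M.rk X = n}

/-- `𝒞_A`: the central sets lying over `A`. -/
def CA (A : Set (E G S)) : Set (Finset S) := {X | X ∈ M.C ∧ under G X = A}

/-- The type of central sets. -/
abbrev Cen : Type _ := {X : Finset S // X ∈ M.C}

/-- The `G`-orbit relation on central sets. -/
def cenRel (X Y : M.Cen) : Prop := ∃ g : G, X.1.image (g • ·) = Y.1

/-- The set `𝒞/G` of orbits of central sets. -/
def COrb : Type _ := Quot M.cenRel

/-- The action is cofinite if `𝒞/G` is finite. -/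
def Cofinite : Prop := Finite M.COrb

/-- `m_𝔖(A) = |𝒞_A / G|`. -/
noncomputable def m (A : Set (E G S)) : ℕ :=
  Nat.card {O : M.COrb // ∃ X : M.Cen, under G X.1 = A ∧ Quot.mk M.cenRel X = O}

def WeaklyTranslative : Prop :=
  ∀ (g : G) (x : S), ({x, g • x} : Finset S) ∈ M.C →
    M.rk {x, g • x} = M.rk ({x} : Finset S)

def Translative : Prop :=
  ∀ (g : G) (x : S), ({x, g • x} : Finset S) ∈ M.C → g • x = x

def Centered : Prop := ∃ X ∈ M.C, under G X = (Set.univ : Set (E G S))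

def Normal (_M : GSemimatroid G S) : Prop :=
  ∀ x : S, Subgroup.Normal (MulAction.stabilizer G x)

def AlmostArithmetic : Prop := M.Translative ∧ M.Normal

/-- The action is arithmetic: almost-arithmetic, and for every central `X` the set
`W(X) ⊆ Γ^X` is a subgroup (expressed via representative families of group elements). -/
def Arithmetic : Prop :=
  M.AlmostArithmetic ∧
    ∀ ⦃X : Finset S⦄, X ∈ M.C → ∀ γ δ : S → G,
      X.image (fun x => γ x • x) ∈ M.C → X.image (fun x => δ x • x) ∈ M.C →
        X.image (fun x => (γ x * δ x) • x) ∈ M.C ∧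
          X.image (fun x => (γ x)⁻¹ • x) ∈ M.C

/-- Remove from `X` all elements of the orbit `a₀`. -/
noncomputable def strip (a₀ : E G S) (X : Finset S) : Finset S :=
  X.filter (fun x => orbOf G x ≠ a₀)

/-- The Tutte polynomial of a `G`-semimatroid, as a function `ℤ × ℤ → ℤ`. -/
noncomputable def Tutte (x y : ℤ) : ℤ :=
  ∑ᶠ A ∈ M.CQ, (M.m A : ℤ) * (x - 1) ^ (M.rkQ Set.univ - M.rkQ A) *
    (y - 1) ^ (Nat.card A - M.rkQ A)

end GSemimatroid

open GSemimatroid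

namespace GSemimatroid

variable {G S : Type*} [Group G] [MulAction G S] [DecidableEq S]

/-- The rank of an orbit of central sets. -/
def corbRk (M : GSemimatroid G S) : M.COrb → ℕ :=
  Quot.lift (fun X => M.rk X.1) (by
    rintro X Y ⟨g, hg⟩
    try dsimp only
    rw [← hg]
    exact (M.rk_smul g X.2).symm)

/-- The cardinality of (any representative of) an orbit of central sets. -/
def corbCard (M : GSemimatroid G S) : M.COrb → ℕ :=
  Quot.lift (fun X => X.1.card) (by
    rintro X Y ⟨g, hg⟩
    try dsimp only
    rw [← hg, Finset.card_image_of_injective _ (MulAction.injective g)])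

end GSemimatroid

/-!
Translativity forces two points of a central set lying in the same `G`-orbit to coincide.
Hence `x ↦ Gx` is injective on every central set `X`, so `|X̲| = |X|`, and, via (CR2), a central
set `X` has maximal rank among the central sets `Y` with `Y̲ ⊆ X̲`, so `rk̲ X̲ = rk X`.
The summand of `GX` on the right is therefore the summand of `X̲` in the Tutte polynomial,
and grouping orbits by their image `A` produces the multiplicity `m_𝔖(A)`.
-/

theorem finsum_mem_range_card_fiber_smul {α β R : Type*} [Finite α] [AddCommMonoid R]
    (u : α → β) (f : β → R) :
    ∑ᶠ b ∈ Set.range u, Nat.card {a // u a = b} • f b = ∑ᶠ a, f (u a) := by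
  have := Fintype.ofFinite α
  rw [← Set.image_univ, ← Finset.coe_univ, ← Finset.coe_image, finsum_mem_coe_finset,
    finsum_eq_sum_of_fintype, Finset.sum_comp]
  refine Finset.sum_congr rfl fun b _ => ?_
  rw [Nat.card_eq_fintype_card, Fintype.card_subtype]

namespace GSemimatroid

theorem orbOf_smul {G S : Type*} [Group G] [MulAction G S] (g : G) (x : S) :
    orbOf G (g • x) = orbOf G x :=
  Quotient.sound (MulAction.mem_orbit x g)

variable {G S : Type*} [Group G] [MulAction G S] [DecidableEq S]

theorem under_image_smul (g : G) (X : Finset S) :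
    under G (X.image (g • ·)) = under G X := by
  simp only [under, Finset.coe_image, ← Set.image_comp, Function.comp_def, orbOf_smul]

variable (M : GSemimatroid G S)

def corbUnder : M.COrb → Set (E G S) :=
  Quot.lift (fun X => under G X.1) (by
    rintro X Y ⟨g, hg⟩
    rw [← hg, under_image_smul])

theorem CQ_eq_range_corbUnder : M.CQ = Set.range M.corbUnder := by
  ext A
  constructor
  · rintro ⟨X, hX, rfl⟩
    exact ⟨Quot.mk _ ⟨X, hX⟩, rfl⟩
  · rintro ⟨O, rfl⟩
    induction O using Quot.ind with
    | _ X => exact ⟨X.1, X.2, rfl⟩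

theorem m_eq_card_fiber (A : Set (E G S)) :
    M.m A = Nat.card {O // M.corbUnder O = A} := by
  unfold m
  congr 2
  ext O
  constructor
  · rintro ⟨X, hX, rfl⟩
    exact hX
  · induction O using Quot.ind with
    | _ X => exact fun h => ⟨X, h, rfl⟩

variable {M}

theorem Translative.eq_of_orbOf_eq (htr : M.Translative) {Z : Finset S} (hZ : Z ∈ M.C)
    {x y : S} (hx : x ∈ Z) (hy : y ∈ Z) (hxy : orbOf G x = orbOf G y) : x = y := by
  obtain ⟨g, rfl⟩ : x ∈ MulAction.orbit G y := Quotient.exact hxy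
  refine htr g y (M.downClosed hZ ?_)
  simp [Finset.insert_subset_iff, hx, hy]

theorem Translative.card_under (htr : M.Translative) {X : Finset S} (hX : X ∈ M.C) :
    Nat.card (under G X) = X.card := by
  rw [Nat.card_coe_set_eq, under,
    Set.InjOn.ncard_image fun x hx y hy => htr.eq_of_orbOf_eq hX hx hy, Set.ncard_coe_finset]

theorem Translative.rk_le_of_under_subset (htr : M.Translative) {X Y : Finset S}
    (hX : X ∈ M.C) (hY : Y ∈ M.C) (hYX : under G Y ⊆ under G X) : M.rk Y ≤ M.rk X := by
  by_contra! hlt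
  obtain ⟨y, hyY, hyX, hins⟩ := M.cr2 hX hY hlt
  obtain ⟨x, hxX, hxy⟩ := hYX ⟨y, hyY, rfl⟩
  have : x = y := htr.eq_of_orbOf_eq hins (Finset.mem_insert_of_mem hxX)
    (Finset.mem_insert_self y X) hxy
  exact hyX (this ▸ hxX)

theorem Translative.rkQ_under (htr : M.Translative) {X : Finset S} (hX : X ∈ M.C) :
    M.rkQ (under G X) = M.rk X := by
  have hbound : M.rk X ∈ upperBounds {n | ∃ Y ∈ M.C, under G Y ⊆ under G X ∧ M.rk Y = n} := by
    rintro n ⟨Y, hY, hYX, rfl⟩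
    exact htr.rk_le_of_under_subset hX hY hYX
  exact le_antisymm (csSup_le ⟨_, X, hX, subset_rfl, rfl⟩ hbound)
    (le_csSup ⟨_, hbound⟩ ⟨X, hX, subset_rfl, rfl⟩)

end GSemimatroid

/-- For a translative cofinite `G`-semimatroid, the Tutte polynomial
equals the corank–nullity polynomial of the orbit set `𝒞_𝔖 = 𝒞/G`, evaluated at
`u = x - 1`, `v = y - 1`. -/
theorem Tutte_eq_corankNullity
    {G S : Type*} [Group G] [MulAction G S] [DecidableEq S]
    (M : GSemimatroid G S) (hcof : M.Cofinite) (htr : M.Translative) :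
    ∀ x y : ℤ,
      M.Tutte x y =
        ∑ᶠ O : M.COrb, (x - 1) ^ (M.rkQ Set.univ - M.corbRk O) *
          (y - 1) ^ (M.corbCard O - M.corbRk O) := by
  intro x y
  have : Finite M.COrb := hcof
  set f : Set (E G S) → ℤ := fun A =>
    (x - 1) ^ (M.rkQ Set.univ - M.rkQ A) * (y - 1) ^ (Nat.card A - M.rkQ A)
  have hsummand : ∀ O : M.COrb, (x - 1) ^ (M.rkQ Set.univ - M.corbRk O) *
      (y - 1) ^ (M.corbCard O - M.corbRk O) = f (M.corbUnder O) := by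
    refine Quot.ind fun X => ?_
    simp only [f, corbUnder, corbRk, corbCard, htr.rkQ_under X.2, htr.card_under X.2]
  calc M.Tutte x y
        = ∑ᶠ A ∈ Set.range M.corbUnder, Nat.card {O // M.corbUnder O = A} • f A := by
        simp only [Tutte, CQ_eq_range_corbUnder, m_eq_card_fiber, nsmul_eq_mul, f, mul_assoc]
    _ = _ := by
        rw [finsum_mem_range_card_fiber_smul]
        exact finsum_congr fun O => (hsummand O).symm
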